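/- Let λ : ℂ → (0, ∞) be continuous with λ(z) = 1/y on {y ≥ 1} and λ(z) = e^{1−y} on {y < 1}. For the associated length metric d on ℂ, the distance from a = i to the point x + i (x ∈ ℝ) satisfies d(i, x+i) = arccosh(1 + x²/2); in particular the shortest path between two points of {y = 1} lies entirely in {y ≥ 1}. -/

import Mathlib

open MeasureTheory
open Set

/-- The conformal factor of the surface Y: λ = 1/y on P = {y ≥ 1} and
λ = e^{1−y} on Q = {y < 1}. -/
noncomputable def lam (z : ℂ) : ℝ :=
  if 1 ≤ z.im then 1 / z.im else Real.exp (1 - z.im)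

/-- Length of a path in the metric λ|dz| of Y. -/
noncomputable def pathLen (γ : ℝ → ℂ) : ℝ :=
  ∫ t in (0:ℝ)..1, lam (γ t) * ‖deriv γ t‖

/-- The length metric of Y: infimum of lengths of C¹ paths joining p to q. -/
noncomputable def Ydist (p q : ℂ) : ℝ :=
  sInf {L : ℝ | ∃ γ : ℝ → ℂ, ContDiff ℝ 1 γ ∧ γ 0 = p ∧ γ 1 = q ∧ L = pathLen γ}

/-- Area of a subset of Y, with area element λ² dx dy. -/
noncomputable def Yarea (S : Set ℂ) : ℝ :=
  ∫ z in S, (lam z) ^ 2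

/-- The open metric ball D(a, r) of Y about the basepoint a = i. -/
def Dball (r : ℝ) : Set ℂ := {z : ℂ | Ydist Complex.I z < r}

/-- The length of β_r = β ∩ D(a, r), where β = {y = 1}; since λ = 1 on β this
is the Lebesgue measure of the corresponding set of abscissas. -/
noncomputable def lenBeta (r : ℝ) : ℝ :=
  (volume {x : ℝ | Ydist Complex.I ((x : ℂ) + Complex.I) < r}).toReal

/-- The intrinsic metric of Q ∪ β = {y ≤ 1} with the flat metric e^{1−y}|dz|:
infimum of lengths of C¹ paths staying in {y ≤ 1}. -/
noncomputable def dQ (p q : ℂ) : ℝ :=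
  sInf {L : ℝ | ∃ γ : ℝ → ℂ, ContDiff ℝ 1 γ ∧ (∀ t, (γ t).im ≤ 1) ∧
    γ 0 = p ∧ γ 1 = q ∧
    L = ∫ t in (0:ℝ)..1, Real.exp (1 - (γ t).im) * ‖deriv γ t‖}

/-- The nearest-point projection of p ∈ Q onto β = {y = 1} (the point of β
closest to p, namely the vertical projection p′ = Re p + i). -/
noncomputable def projBeta (p : ℂ) : ℂ := (p.re : ℂ) + Complex.I

/- STATEMENT 19: for the length metric d of λ (λ = 1/y on {y ≥ 1}, e^{1−y} on
{y < 1}), the distance from a = i to x + i satisfies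
d(i, x + i) = arccosh(1 + x²/2), i.e. cosh d(i, x+i) = 1 + x²/2 with
d(i, x+i) ≥ 0; in particular any length-minimizing path between two points of
{y = 1} lies entirely in {y ≥ 1}. -/
lemma lam_pos (z : ℂ) : 0 < lam z := by
  unfold lam; split
  · positivity
  · exact Real.exp_pos _

lemma lam_continuous : Continuous lam := by
  have h : lam = fun z : ℂ => (fun y : ℝ => if 1 ≤ y then 1 / max y (1/2) else Real.exp (1 - y)) z.im := by
    funext z
    simp only
    unfold lam
    split
    · rename_i h; rw [max_eq_left (by linarith)]
    · rfl
  rw [h]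
  refine Continuous.comp (g := fun y : ℝ => if 1 ≤ y then 1 / max y (1/2) else Real.exp (1 - y)) ?_ Complex.continuous_im
  refine Continuous.if_le ?_ ?_ continuous_const continuous_id ?_
  · exact continuous_const.div (continuous_id.max continuous_const) (fun y => by positivity)
  · exact (Real.continuous_exp.comp (continuous_const.sub continuous_id))
  · intro y hy; simp [← hy]; norm_num

lemma lam_ge_of_im_le_one {z : ℂ} (h : z.im ≤ 1) : Real.exp (1 - z.im) ≤ lam z ∧ 1 ≤ lam z := by
  unfold lam
  rcases eq_or_lt_of_le h with h1 | h1
  · rw [if_pos (le_of_eq h1.symm)]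
    constructor
    · rw [h1]; simp
    · rw [h1]; norm_num
  · rw [if_neg (by linarith)]
    refine ⟨le_refl _, ?_⟩
    have : (0:ℝ) ≤ 1 - z.im := by linarith
    calc (1:ℝ) = Real.exp 0 := by simp
    _ ≤ Real.exp (1 - z.im) := Real.exp_le_exp.2 (by linarith)

lemma pathLen_nonneg (γ : ℝ → ℂ) : 0 ≤ pathLen γ :=
  intervalIntegral.integral_nonneg zero_le_one
    (fun u _ => mul_nonneg (lam_pos _).le (norm_nonneg _))

lemma pathSet_nonempty (p q : ℂ) :
    {L : ℝ | ∃ γ : ℝ → ℂ, ContDiff ℝ 1 γ ∧ γ 0 = p ∧ γ 1 = q ∧ L = pathLen γ}.Nonempty := by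
  refine ⟨pathLen (fun t : ℝ => p + (t:ℂ) * (q - p)), fun t : ℝ => p + (t:ℂ) * (q - p), ?_, by simp, by simp, rfl⟩
  exact contDiff_const.add ((Complex.ofRealCLM.contDiff).mul contDiff_const)

lemma pathSet_bddBelow (p q : ℂ) :
    BddBelow {L : ℝ | ∃ γ : ℝ → ℂ, ContDiff ℝ 1 γ ∧ γ 0 = p ∧ γ 1 = q ∧ L = pathLen γ} :=
  ⟨0, fun L hL => by obtain ⟨γ, -, -, -, rfl⟩ := hL; exact pathLen_nonneg γ⟩

lemma Ydist_nonneg (p q : ℂ) : 0 ≤ Ydist p q :=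
  le_csInf (pathSet_nonempty p q) (fun L hL => by obtain ⟨γ, -, -, -, rfl⟩ := hL; exact pathLen_nonneg γ)


noncomputable def G (ε u : ℝ) : ℝ := Real.log (1 + ε + u + Real.sqrt ((1 + ε + u)^2 - 1))

noncomputable def U (c : ℝ) (z : ℂ) : ℝ :=
  if 1 ≤ z.im then ((z.re - c)^2 + (z.im - 1)^2) / (2 * z.im) else (z.re - c)^2 / 2

noncomputable def F (c ε : ℝ) (z : ℂ) : ℝ := G ε (U c z)

lemma sq_sub_one_pos {ε u : ℝ} (hε : 0 < ε) (hu : 0 ≤ u) : 0 < (1 + ε + u)^2 - 1 := by nlinarith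

lemma sqrt_pos' {ε u : ℝ} (hε : 0 < ε) (hu : 0 ≤ u) : 0 < Real.sqrt ((1 + ε + u)^2 - 1) :=
  Real.sqrt_pos.2 (sq_sub_one_pos hε hu)

lemma hasDerivAt_G {ε : ℝ} (hε : 0 < ε) {v : ℝ} (hv : 0 ≤ v) :
    HasDerivAt (G ε) (1 / Real.sqrt ((1 + ε + v)^2 - 1)) v := by
  have hpos := sq_sub_one_pos hε hv
  have hs := sqrt_pos' hε hv
  have h1 : HasDerivAt (fun u : ℝ => 1 + ε + u) 1 v := (hasDerivAt_id v).const_add (1 + ε)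
  have h2 : HasDerivAt (fun u : ℝ => (1 + ε + u)^2 - 1) (2 * (1 + ε + v)) v := by
    have := (h1.pow 2).sub_const 1
    simpa using this
  have h3 := h2.sqrt (ne_of_gt hpos)
  have h4 := h1.add h3
  have h5 : 0 < 1 + ε + v + Real.sqrt ((1 + ε + v)^2 - 1) := by positivity
  have h6 := h4.log (ne_of_gt h5)
  refine h6.congr_deriv (Eq.symm ?_)
  simp only [Pi.add_apply]
  field_simp
  ring

lemma abs_lin_le {a b K : ℝ} (hK : 0 ≤ K) (h : a^2 + b^2 ≤ K^2) (w : ℂ) :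
    |a * w.re + b * w.im| ≤ K * ‖w‖ := by
  have hn : w.re^2 + w.im^2 = ‖w‖^2 := by
    rw [Complex.sq_norm, Complex.normSq_apply]; ring
  have hn0 : (0:ℝ) ≤ ‖w‖ := norm_nonneg w
  have cs : (a * w.re + b * w.im)^2 ≤ (K * ‖w‖)^2 := by
    nlinarith [mul_le_mul_of_nonneg_right h (show (0:ℝ) ≤ w.re^2 + w.im^2 by positivity),
      sq_nonneg (a * w.im - b * w.re)]
  calc |a * w.re + b * w.im| = Real.sqrt ((a * w.re + b * w.im)^2) := (Real.sqrt_sq_eq_abs _).symm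
  _ ≤ Real.sqrt ((K * ‖w‖)^2) := Real.sqrt_le_sqrt cs
  _ = |K * ‖w‖| := Real.sqrt_sq_eq_abs _
  _ = K * ‖w‖ := abs_of_nonneg (mul_nonneg hK hn0)

lemma upper_fderiv (c ε : ℝ) (hε : 0 < ε) {z : ℂ} (hz : 0 < z.im) :
    ∃ D : ℂ →L[ℝ] ℝ,
      HasFDerivAt (fun w : ℂ => G ε (((w.re - c)^2 + (w.im - 1)^2) / (2 * w.im))) D z ∧
      ‖D‖ ≤ 1 / z.im := by
  have hY0 : z.im ≠ 0 := ne_of_gt hz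
  set X := z.re - c with hX
  set Y := z.im with hY
  set u := (X^2 + (Y - 1)^2) / (2 * Y) with hu
  have hu0 : 0 ≤ u := by rw [hu]; positivity
  set s := Real.sqrt ((1 + ε + u)^2 - 1) with hs
  have hspos : 0 < s := sqrt_pos' hε hu0
  set px := X / Y with hpx
  set py := (Y^2 - 1 - X^2) / (2 * Y^2) with hpy
  -- derivative of numerator
  have hN : HasFDerivAt (fun w : ℂ => (w.re - c)^2 + (w.im - 1)^2)
      ((2*X) • (Complex.reCLM : ℂ →L[ℝ] ℝ) + (2*(Y-1)) • (Complex.imCLM : ℂ →L[ℝ] ℝ)) z := by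
    have h1 : HasDerivAt (fun x : ℝ => (x - c)^2) (2*X) z.re := by
      exact (((hasDerivAt_id z.re).sub_const c).pow 2).congr_deriv (by simp [hX])
    have h2 : HasDerivAt (fun y : ℝ => (y - 1)^2) (2*(Y-1)) z.im := by
      exact (((hasDerivAt_id z.im).sub_const 1).pow 2).congr_deriv (by simp [hY])
    exact (h1.comp_hasFDerivAt z Complex.reCLM.hasFDerivAt).add
      (h2.comp_hasFDerivAt z Complex.imCLM.hasFDerivAt)
  have hInv : HasFDerivAt (fun w : ℂ => (2 * w.im)⁻¹)
      ((-(1/(2*Y^2))) • (Complex.imCLM : ℂ →L[ℝ] ℝ)) z := by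
    have h1 : HasDerivAt (fun y : ℝ => (2*y)⁻¹) (-(1/(2*Y^2))) z.im := by
      have h2 : HasDerivAt (fun y : ℝ => 2*y) 2 z.im := by simpa using (hasDerivAt_id z.im).const_mul 2
      have := h2.inv (by positivity)
      refine this.congr_deriv (Eq.symm ?_)
      rw [← hY]
      field_simp
    exact h1.comp_hasFDerivAt z Complex.imCLM.hasFDerivAt
  have hU : HasFDerivAt (fun w : ℂ => ((w.re - c)^2 + (w.im - 1)^2) / (2 * w.im))
      (px • (Complex.reCLM : ℂ →L[ℝ] ℝ) + py • (Complex.imCLM : ℂ →L[ℝ] ℝ)) z := by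
    simp only [div_eq_mul_inv]
    have := hN.mul hInv
    refine this.congr_fderiv (Eq.symm ?_)
    ext w
    simp only [ContinuousLinearMap.add_apply, ContinuousLinearMap.coe_smul',
      Pi.smul_apply, Complex.reCLM_apply, Complex.imCLM_apply, smul_eq_mul]
    rw [hpx, hpy]
    rw [← hY, ← hX]
    field_simp
    ring
  have hG := hasDerivAt_G hε hu0
  have hF := hG.comp_hasFDerivAt z hU
  refine ⟨_, hF, ?_⟩
  apply ContinuousLinearMap.opNorm_le_bound _ (by positivity)
  intro w
  have heval : ((1 / s) • (px • (Complex.reCLM : ℂ →L[ℝ] ℝ) + py • (Complex.imCLM : ℂ →L[ℝ] ℝ))) w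
      = (1/s * px) * w.re + (1/s * py) * w.im := by
    simp only [ContinuousLinearMap.coe_smul', Pi.smul_apply, ContinuousLinearMap.add_apply,
      Complex.reCLM_apply, Complex.imCLM_apply, smul_eq_mul]
    ring
  rw [← hs, heval, Real.norm_eq_abs]
  have key : (1/s * px)^2 + (1/s * py)^2 ≤ (1/Y)^2 := by
    have hid : px^2 + py^2 = ((1 + u)^2 - 1) / Y^2 := by
      rw [hpx, hpy, hu]
      field_simp
      ring
    have hss : s^2 = (1 + ε + u)^2 - 1 := Real.sq_sqrt (le_of_lt (sq_sub_one_pos hε hu0))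
    have hle : (1 + u)^2 - 1 ≤ (1 + ε + u)^2 - 1 := by nlinarith
    have h2 : (0:ℝ) ≤ (1+u)^2 - 1 := by nlinarith
    have h1 : (1/s * px)^2 + (1/s * py)^2 = (px^2 + py^2) / s^2 := by
      field_simp
    rw [h1, hid, hss, div_div, div_le_iff₀ (mul_pos (by positivity) (sq_sub_one_pos hε hu0) : (0:ℝ) < Y^2*((1+ε+u)^2-1))]
    have hq : (1/Y)^2 * (Y^2 * ((1+ε+u)^2 -1)) = (1+ε+u)^2 - 1 := by field_simp
    rw [hq]; exact hle
  exact abs_lin_le (by positivity) key w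

lemma lower_fderiv (c ε : ℝ) (hε : 0 < ε) (z : ℂ) :
    ∃ D : ℂ →L[ℝ] ℝ,
      HasFDerivAt (fun w : ℂ => G ε ((w.re - c)^2 / 2)) D z ∧ ‖D‖ ≤ 1 := by
  set X := z.re - c with hX
  set u := X^2/2 with hu
  have hu0 : 0 ≤ u := by positivity
  set s := Real.sqrt ((1 + ε + u)^2 - 1) with hs
  have hspos : 0 < s := sqrt_pos' hε hu0
  have hU : HasFDerivAt (fun w : ℂ => (w.re - c)^2/2) (X • (Complex.reCLM : ℂ →L[ℝ] ℝ)) z := by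
    have h1 : HasDerivAt (fun x : ℝ => (x - c)^2/2) X z.re := by
      have := (((hasDerivAt_id z.re).sub_const c).pow 2).div_const 2
      simpa using this
    exact h1.comp_hasFDerivAt z Complex.reCLM.hasFDerivAt
  have hG := hasDerivAt_G hε hu0
  have hF := hG.comp_hasFDerivAt z hU
  refine ⟨_, hF, ?_⟩
  apply ContinuousLinearMap.opNorm_le_bound _ zero_le_one
  intro w
  have heval : ((1 / s) • (X • (Complex.reCLM : ℂ →L[ℝ] ℝ))) w = (1/s * X) * w.re + 0 * w.im := by
    simp only [ContinuousLinearMap.coe_smul', Pi.smul_apply, Complex.reCLM_apply, smul_eq_mul]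
    ring
  rw [← hs, heval, Real.norm_eq_abs]
  have key : (1/s * X)^2 + (0:ℝ)^2 ≤ (1:ℝ)^2 := by
    have hss : s^2 = (1 + ε + u)^2 - 1 := Real.sq_sqrt (le_of_lt (sq_sub_one_pos hε hu0))
    have h1 : X^2 ≤ s^2 := by rw [hss, hu]; nlinarith
    have h2 : (1/s * X)^2 = X^2/s^2 := by field_simp
    rw [h2]
    have h3 : X^2/s^2 ≤ 1 := by
      rw [div_le_one (by positivity)]
      exact h1
    nlinarith
  have := abs_lin_le zero_le_one key w
  simpa using this

lemma F_eq_upper (c ε : ℝ) {z : ℂ} (h : 1 ≤ z.im) :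
    F c ε z = G ε (((z.re - c)^2 + (z.im - 1)^2) / (2 * z.im)) := by
  unfold F U; rw [if_pos h]

lemma F_eq_lower (c ε : ℝ) {z : ℂ} (h : z.im ≤ 1) :
    F c ε z = G ε ((z.re - c)^2 / 2) := by
  unfold F U
  rcases lt_or_eq_of_le h with h1 | h1
  · rw [if_neg (not_le.2 h1)]
  · rw [if_pos (le_of_eq h1.symm), h1]
    norm_num
section C
variable {c ε : ℝ}

lemma lipOn_upper (hε : 0 < ε) {s : Set ℂ} (hconv : Convex ℝ s)
    (hs : s ⊆ {z : ℂ | 1 ≤ z.im}) {K : ℝ} (hK : ∀ z ∈ s, 1 / z.im ≤ K) :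
    ∀ w₁ ∈ s, ∀ w₂ ∈ s, |F c ε w₁ - F c ε w₂| ≤ K * ‖w₁ - w₂‖ := by
  classical
  intro w₁ h₁ w₂ h₂
  set f' : ℂ → (ℂ →L[ℝ] ℝ) := fun z =>
    if h : 0 < z.im then (upper_fderiv c ε hε h).choose else 0 with hf'
  have hder : ∀ z ∈ s, HasFDerivWithinAt
      (fun w : ℂ => G ε (((w.re - c)^2 + (w.im - 1)^2) / (2 * w.im))) (f' z) s z := by
    intro z hz
    have him : (0:ℝ) < z.im := lt_of_lt_of_le one_pos (hs hz)
    have h0 := (upper_fderiv c ε hε him).choose_spec.1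
    simp only [hf', dif_pos him]
    exact h0.hasFDerivWithinAt
  have hbd : ∀ z ∈ s, ‖f' z‖ ≤ K := by
    intro z hz
    have him : (0:ℝ) < z.im := lt_of_lt_of_le one_pos (hs hz)
    simp only [hf', dif_pos him]
    exact (upper_fderiv c ε hε him).choose_spec.2.trans (hK z hz)
  have hmain := Convex.norm_image_sub_le_of_norm_hasFDerivWithin_le hder hbd hconv h₂ h₁
  rw [F_eq_upper c ε (hs h₁), F_eq_upper c ε (hs h₂)]
  simpa [Real.norm_eq_abs] using hmain

lemma lipOn_lower (hε : 0 < ε) {w₁ w₂ : ℂ} (h₁ : w₁.im ≤ 1) (h₂ : w₂.im ≤ 1) :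
    |F c ε w₁ - F c ε w₂| ≤ ‖w₁ - w₂‖ := by
  classical
  set f' : ℂ → (ℂ →L[ℝ] ℝ) := fun z => (lower_fderiv c ε hε z).choose with hf'
  have hder : ∀ z ∈ {z : ℂ | z.im ≤ 1}, HasFDerivWithinAt
      (fun w : ℂ => G ε ((w.re - c)^2 / 2)) (f' z) {z : ℂ | z.im ≤ 1} z :=
    fun z _ => ((lower_fderiv c ε hε z).choose_spec.1).hasFDerivWithinAt
  have hbd : ∀ z ∈ {z : ℂ | z.im ≤ 1}, ‖f' z‖ ≤ 1 :=
    fun z _ => (lower_fderiv c ε hε z).choose_spec.2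
  have hmain := Convex.norm_image_sub_le_of_norm_hasFDerivWithin_le hder hbd
    (convex_halfSpace_im_le 1) (Set.mem_setOf.2 h₂) (Set.mem_setOf.2 h₁)
  rw [F_eq_lower c ε h₁, F_eq_lower c ε h₂]
  simpa [Real.norm_eq_abs] using hmain

lemma F_pair (hε : 0 < ε) {K : ℝ} (hK1 : 1 ≤ K) {s : Set ℂ} (hconv : Convex ℝ s)
    (hKs : ∀ z ∈ s, 1 ≤ z.im → 1 / z.im ≤ K) :
    ∀ w₁ ∈ s, ∀ w₂ ∈ s, |F c ε w₁ - F c ε w₂| ≤ K * ‖w₁ - w₂‖ := by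
  have upper : ∀ w₁ ∈ s, ∀ w₂ ∈ s, 1 ≤ w₁.im → 1 ≤ w₂.im →
      |F c ε w₁ - F c ε w₂| ≤ K * ‖w₁ - w₂‖ := by
    intro w₁ h₁ w₂ h₂ hi₁ hi₂
    exact lipOn_upper hε (hconv.inter (convex_halfSpace_im_ge 1))
      (Set.inter_subset_right)
      (fun z hz => hKs z hz.1 hz.2) w₁ ⟨h₁, hi₁⟩ w₂ ⟨h₂, hi₂⟩
  have lower : ∀ w₁ w₂ : ℂ, w₁.im ≤ 1 → w₂.im ≤ 1 →
      |F c ε w₁ - F c ε w₂| ≤ K * ‖w₁ - w₂‖ := by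
    intro w₁ w₂ hi₁ hi₂
    calc |F c ε w₁ - F c ε w₂| ≤ ‖w₁ - w₂‖ := lipOn_lower hε hi₁ hi₂
    _ ≤ K * ‖w₁ - w₂‖ := by nlinarith [norm_nonneg (w₁ - w₂)]
  -- mixed case helper
  have mixed : ∀ w₁ ∈ s, ∀ w₂ ∈ s, w₂.im < 1 → 1 ≤ w₁.im →
      |F c ε w₁ - F c ε w₂| ≤ K * ‖w₁ - w₂‖ := by
    intro w₁ h₁ w₂ h₂ hi₂ hi₁
    set θ : ℝ := (1 - w₂.im) / (w₁.im - w₂.im) with hθ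
    have hden : 0 < w₁.im - w₂.im := by linarith
    have hθ0 : 0 ≤ θ := by
      apply div_nonneg (by linarith) (le_of_lt hden)
    have hθ1 : θ ≤ 1 := by
      rw [hθ, div_le_one hden]; linarith
    set m : ℂ := w₂ + (θ:ℂ) * (w₁ - w₂) with hm
    have hmim : m.im = 1 := by
      rw [hm]
      simp [Complex.add_im, Complex.mul_im, Complex.ofReal_re, Complex.ofReal_im,
        Complex.sub_im]
      rw [hθ]
      field_simp
      ring
    have hms : m ∈ s := by
      have h := hconv h₂ h₁ (by linarith : (0:ℝ) ≤ 1 - θ) hθ0 (by ring)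
      have : (1 - θ) • w₂ + θ • w₁ = m := by
        rw [hm]
        push_cast [Complex.real_smul]
        ring
      rwa [this] at h
    have hn1 : ‖w₁ - m‖ = (1 - θ) * ‖w₁ - w₂‖ := by
      have : w₁ - m = ((1 - θ : ℝ):ℂ) * (w₁ - w₂) := by
        rw [hm]; push_cast; ring
      rw [this, norm_mul, Complex.norm_real, Real.norm_eq_abs,
        abs_of_nonneg (by linarith : (0:ℝ) ≤ 1 - θ)]
    have hn2 : ‖m - w₂‖ = θ * ‖w₁ - w₂‖ := by
      have : m - w₂ = ((θ:ℝ):ℂ) * (w₁ - w₂) := by rw [hm]; push_cast; ring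
      rw [this, norm_mul, Complex.norm_real, Real.norm_eq_abs, abs_of_nonneg hθ0]
    have e1 : |F c ε w₁ - F c ε m| ≤ K * ‖w₁ - m‖ :=
      upper w₁ h₁ m hms hi₁ (le_of_eq hmim.symm)
    have e2 : |F c ε m - F c ε w₂| ≤ K * ‖m - w₂‖ :=
      lower m w₂ (le_of_eq hmim) (le_of_lt hi₂)
    calc |F c ε w₁ - F c ε w₂| ≤ |F c ε w₁ - F c ε m| + |F c ε m - F c ε w₂| := by
          have := abs_sub_le (F c ε w₁) (F c ε m) (F c ε w₂); linarith [this]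
    _ ≤ K * ‖w₁ - m‖ + K * ‖m - w₂‖ := by linarith
    _ = K * ‖w₁ - w₂‖ := by rw [hn1, hn2]; ring
  intro w₁ h₁ w₂ h₂
  rcases le_or_gt 1 w₁.im with hi₁ | hi₁ <;> rcases le_or_gt 1 w₂.im with hi₂ | hi₂
  · exact upper w₁ h₁ w₂ h₂ hi₁ hi₂
  · exact mixed w₁ h₁ w₂ h₂ hi₂ hi₁
  · rw [abs_sub_comm, ← norm_sub_rev]
    exact mixed w₂ h₂ w₁ h₁ hi₁ hi₂
  · exact lower w₁ w₂ (le_of_lt hi₁) (le_of_lt hi₂)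

end C
section D
variable {c ε : ℝ}

lemma im_le_of_mem_ball {z w : ℂ} {ρ : ℝ} (h : w ∈ Metric.closedBall z ρ) :
    |w.im - z.im| ≤ ρ := by
  have h1 := Complex.abs_im_le_norm (w - z)
  rw [Complex.sub_im] at h1
  have h2 : dist w z ≤ ρ := Metric.mem_closedBall.1 h
  rw [Complex.dist_eq] at h2
  exact h1.trans h2

lemma F_locLip (hε : 0 < ε) (z : ℂ) {η : ℝ} (hη : 0 < η) :
    ∃ ρ > 0, ∀ w₁ ∈ Metric.closedBall z ρ, ∀ w₂ ∈ Metric.closedBall z ρ,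
      |F c ε w₁ - F c ε w₂| ≤ (lam z + η) * ‖w₁ - w₂‖ := by
  rcases lt_trichotomy z.im 1 with hz | hz | hz
  · -- below the horocycle
    refine ⟨(1 - z.im)/2, by linarith, fun w₁ h₁ w₂ h₂ => ?_⟩
    have hi₁ : w₁.im ≤ 1 := by have := im_le_of_mem_ball h₁; rw [abs_le] at this; linarith [this.2]
    have hi₂ : w₂.im ≤ 1 := by have := im_le_of_mem_ball h₂; rw [abs_le] at this; linarith [this.2]
    have h3 : (1:ℝ) ≤ lam z := (lam_ge_of_im_le_one (le_of_lt hz)).2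
    calc |F c ε w₁ - F c ε w₂| ≤ ‖w₁ - w₂‖ := lipOn_lower hε hi₁ hi₂
    _ ≤ (lam z + η) * ‖w₁ - w₂‖ := by nlinarith [norm_nonneg (w₁ - w₂)]
  · -- on the horocycle
    have hlam : lam z = 1 := by unfold lam; rw [if_pos (le_of_eq hz.symm), hz]; norm_num
    refine ⟨1, one_pos, ?_⟩
    have := F_pair (c := c) hε (K := lam z + η) (by rw [hlam]; linarith)
      (convex_closedBall z 1) (fun w _ hw => ?_)
    · exact fun w₁ h₁ w₂ h₂ => this w₁ h₁ w₂ h₂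
    · rw [hlam]
      have : 1 / w.im ≤ 1 := by
        rw [div_le_one (by linarith)]; exact hw
      linarith
  · -- above the horocycle
    have hz0 : 0 < z.im := by linarith
    have hlam : lam z = 1 / z.im := by unfold lam; rw [if_pos (by linarith)]
    set ρ₂ : ℝ := η * z.im^2 / (1 + η * z.im) with hρ₂
    have hρ₂pos : 0 < ρ₂ := by positivity
    set ρ : ℝ := min ((z.im - 1)/2) ρ₂ with hρ
    have hρpos : 0 < ρ := lt_min (by linarith) hρ₂pos
    refine ⟨ρ, hρpos, ?_⟩
    have hsub : Metric.closedBall z ρ ⊆ {w : ℂ | 1 ≤ w.im} := by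
      intro w hw
      have h1 := im_le_of_mem_ball hw
      rw [abs_le] at h1
      have h2 : ρ ≤ (z.im - 1)/2 := min_le_left _ _
      simp only [Set.mem_setOf_eq]
      linarith [h1.1]
    have hK : ∀ w ∈ Metric.closedBall z ρ, 1 / w.im ≤ lam z + η := by
      intro w hw
      have h1 := im_le_of_mem_ball hw
      rw [abs_le] at h1
      have h2 : ρ ≤ ρ₂ := min_le_right _ _
      have h3 : z.im / (1 + η * z.im) ≤ w.im := by
        have : z.im - ρ₂ = z.im / (1 + η * z.im) := by
          rw [hρ₂]; field_simp; ring
        linarith [h1.1]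
      have h4 : (0:ℝ) < z.im / (1 + η * z.im) := by positivity
      have h5 : 1 / w.im ≤ 1 / (z.im / (1 + η * z.im)) :=
        one_div_le_one_div_of_le h4 h3
      have h6 : 1 / (z.im / (1 + η * z.im)) = 1 / z.im + η := by
        field_simp
      rw [hlam]
      rw [h6] at h5
      exact h5
    exact lipOn_upper hε (convex_closedBall z ρ) hsub hK

end D
section E
variable {c ε : ℝ}

lemma F_continuous (hε : 0 < ε) : Continuous (F c ε) := by
  refine continuous_iff_continuousAt.2 (fun z => ?_)
  obtain ⟨ρ, hρ, hlip⟩ := F_locLip (c := c) hε z one_pos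
  have hL : LipschitzOnWith (Real.toNNReal (lam z + 1)) (F c ε) (Metric.closedBall z ρ) := by
    rw [lipschitzOnWith_iff_dist_le_mul]
    intro w₁ h₁ w₂ h₂
    rw [Real.dist_eq, Complex.dist_eq]
    have := hlip w₁ h₁ w₂ h₂
    have h0 : (0:ℝ) ≤ lam z + 1 := by linarith [lam_pos z]
    rw [Real.coe_toNNReal _ h0]
    exact this
  exact (hL.continuousOn).continuousAt (Metric.closedBall_mem_nhds z hρ)

lemma len_ge (hε : 0 < ε) {γ : ℝ → ℂ} (hγ : ContDiff ℝ 1 γ) {a b : ℝ} (hab : a ≤ b) :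
    F c ε (γ b) - F c ε (γ a) ≤ ∫ t in a..b, lam (γ t) * ‖deriv γ t‖ := by
  set f : ℝ → ℝ := fun t => F c ε (γ t) - F c ε (γ a) with hf
  set B : ℝ → ℝ := fun t => ∫ s in a..t, lam (γ s) * ‖deriv γ s‖ with hB
  have hcont : Continuous (fun t => lam (γ t) * ‖deriv γ t‖) :=
    (lam_continuous.comp hγ.continuous).mul ((hγ.continuous_deriv le_rfl).norm)
  have hfc : ContinuousOn f (Set.Icc a b) :=
    (((F_continuous hε).comp hγ.continuous).sub continuous_const).continuousOn
  have hBc : ContinuousOn B (Set.Icc a b) :=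
    (intervalIntegral.continuous_primitive (fun a b => hcont.intervalIntegrable a b) a).continuousOn
  have hB' : ∀ t ∈ Set.Ico a b, HasDerivWithinAt B (lam (γ t) * ‖deriv γ t‖) (Set.Ici t) t := by
    intro t _
    exact (intervalIntegral.integral_hasDerivAt_right (hcont.intervalIntegrable a t)
      (hcont.stronglyMeasurableAtFilter _ _) hcont.continuousAt).hasDerivWithinAt
  have bound : ∀ t ∈ Set.Ico a b, ∀ r, lam (γ t) * ‖deriv γ t‖ < r →
      ∃ᶠ z in nhdsWithin t (Set.Ioi t), slope f t z < r := by
    intro t _ r hr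
    set L := lam (γ t) with hL
    set N := ‖deriv γ t‖ with hN
    have hL0 : 0 < L := lam_pos _
    have hN0 : 0 ≤ N := norm_nonneg _
    set η : ℝ := min 1 ((r - L*N)/(2*(L+N+1))) with hη
    have hηpos : 0 < η := by
      apply lt_min one_pos
      apply div_pos (by linarith) (by positivity)
    have hprod : (L + η) * (N + η) < r := by
      have h1 : η ≤ 1 := min_le_left _ _
      have h2 : η ≤ (r - L*N)/(2*(L+N+1)) := min_le_right _ _
      have h3 : η * (2*(L+N+1)) ≤ r - L*N := by
        rw [← le_div_iff₀ (by positivity)]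
        exact h2
      nlinarith
    obtain ⟨ρ, hρ, hlip⟩ := F_locLip (c := c) hε (γ t) hηpos
    have hball : ∀ᶠ z in nhdsWithin t (Set.Ioi t), γ z ∈ Metric.closedBall (γ t) ρ := by
      have := (hγ.continuous.tendsto t).eventually (Metric.closedBall_mem_nhds (γ t) hρ)
      exact this.filter_mono nhdsWithin_le_nhds
    have hslope : ∀ᶠ z in nhdsWithin t (Set.Ioi t), ‖slope γ t z‖ ≤ N + η := by
      have hd : HasDerivAt γ (deriv γ t) t := (hγ.differentiable one_ne_zero t).hasDerivAt
      have h1 := hasDerivAt_iff_tendsto_slope.1 hd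
      have h2 : ∀ᶠ w in nhds (deriv γ t), ‖w‖ ≤ N + η := by
        have : Metric.closedBall (deriv γ t) η ∈ nhds (deriv γ t) :=
          Metric.closedBall_mem_nhds _ hηpos
        refine Filter.eventually_of_mem this (fun w hw => ?_)
        have := Metric.mem_closedBall.1 hw
        rw [dist_eq_norm] at this
        calc ‖w‖ ≤ ‖deriv γ t‖ + ‖w - deriv γ t‖ := by
              have := norm_sub_norm_le w (deriv γ t); linarith [norm_sub_rev w (deriv γ t) ▸ this]
        _ ≤ N + η := by rw [← hN]; rw [norm_sub_rev] at this ⊢; linarith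
      have h3 := h1.eventually h2
      exact h3.filter_mono (nhdsWithin_mono t (fun z hz => ne_of_gt hz))
    have hgt : ∀ᶠ z in nhdsWithin t (Set.Ioi t), t < z := eventually_mem_nhdsWithin
    refine ((hball.and (hslope.and hgt)).mono ?_).frequently
    intro z ⟨hb1, hb2, hb3⟩
    have hzt : 0 < z - t := by linarith
    have hself : γ t ∈ Metric.closedBall (γ t) ρ := Metric.mem_closedBall_self (le_of_lt hρ)
    have hF : F c ε (γ z) - F c ε (γ t) ≤ (L + η) * ‖γ z - γ t‖ := by
      have := hlip (γ z) hb1 (γ t) hself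
      have habs := le_abs_self (F c ε (γ z) - F c ε (γ t))
      linarith
    have hng : ‖γ z - γ t‖ ≤ (N + η) * (z - t) := by
      have h4 : ‖slope γ t z‖ = ‖γ z - γ t‖ / (z - t) := by
        rw [slope]
        rw [norm_smul]
        simp [abs_of_pos hzt, vsub_eq_sub]
        rw [div_eq_inv_mul]
      rw [h4, div_le_iff₀ hzt] at hb2
      exact hb2
    rw [slope_def_field, div_lt_iff₀ hzt]
    have hLη : 0 < L + η := by linarith
    have : f z - f t = F c ε (γ z) - F c ε (γ t) := by rw [hf]; ring
    rw [this]
    calc F c ε (γ z) - F c ε (γ t) ≤ (L + η) * ‖γ z - γ t‖ := hF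
    _ ≤ (L + η) * ((N + η) * (z - t)) := by
        apply mul_le_mul_of_nonneg_left hng (le_of_lt hLη)
    _ = ((L + η) * (N + η)) * (z - t) := by ring
    _ < r * (z - t) := by
        apply mul_lt_mul_of_pos_right hprod hzt
  have ha : f a ≤ B a := by
    rw [hf, hB]
    simp
  have := image_le_of_liminf_slope_right_le_deriv_boundary hfc ha hBc hB' bound
    (Set.right_mem_Icc.2 hab)
  have h2 : f b ≤ B b := this
  rw [hf, hB] at h2
  simp only at h2
  linarith

end E
section Fgeo

lemma geodesic_exists (c x : ℝ) :
    ∃ γ : ℝ → ℂ, ContDiff ℝ 1 γ ∧ γ 0 = (c:ℂ) + Complex.I ∧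
      γ 1 = ((c + x : ℝ):ℂ) + Complex.I ∧ pathLen γ = 2 * |Real.arsinh (x/2)| := by
  set s₀ : ℝ := Real.arsinh (x/2) with hs₀
  set r : ℝ := Real.cosh s₀ with hr
  have hrpos : 0 < r := Real.cosh_pos s₀
  have hsinh : Real.sinh s₀ = x/2 := Real.sinh_arsinh _
  set σ : ℝ → ℝ := fun t => s₀ * (2*t - 1) with hσdef
  set X : ℝ → ℝ := fun t => c + x/2 + r * Real.sinh (σ t) / Real.cosh (σ t) with hXdef
  set Y : ℝ → ℝ := fun t => r / Real.cosh (σ t) with hYdef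
  set γ : ℝ → ℂ := fun t => (X t : ℂ) + (Y t : ℂ) * Complex.I with hγdef
  have hcoshpos : ∀ u : ℝ, 0 < Real.cosh u := fun u => Real.cosh_pos u
  -- smoothness
  have hσc : ContDiff ℝ 1 σ :=
    contDiff_const.mul ((contDiff_const.mul contDiff_id).sub contDiff_const)
  have hXc : ContDiff ℝ 1 X := by
    apply contDiff_const.add
    apply ContDiff.div
    · exact contDiff_const.mul (Real.contDiff_sinh.comp hσc)
    · exact Real.contDiff_cosh.comp hσc
    · exact fun t => ne_of_gt (hcoshpos (σ t))
  have hYc : ContDiff ℝ 1 Y := by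
    apply ContDiff.div contDiff_const (Real.contDiff_cosh.comp hσc)
    exact fun t => ne_of_gt (hcoshpos (σ t))
  have hγc : ContDiff ℝ 1 γ :=
    (Complex.ofRealCLM.contDiff.comp hXc).add
      ((Complex.ofRealCLM.contDiff.comp hYc).mul contDiff_const)
  -- derivatives
  have hσd : ∀ t, HasDerivAt σ (2*s₀) t := by
    intro t
    have h := (((hasDerivAt_id t).const_mul (2:ℝ)).sub_const 1).const_mul s₀
    refine h.congr_deriv (Eq.symm ?_)
    ring
  have hXd : ∀ t, HasDerivAt X (2*s₀*r/(Real.cosh (σ t))^2) t := by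
    intro t
    have hS := (Real.hasDerivAt_sinh (σ t)).comp t (hσd t)
    have hC := (Real.hasDerivAt_cosh (σ t)).comp t (hσd t)
    have hq := hS.div hC (ne_of_gt (hcoshpos (σ t)))
    have h2 := (hq.const_mul r).const_add (c + x/2)
    have hfun : X = fun u => c + x / 2 + r * ((Real.sinh ∘ σ) u / (Real.cosh ∘ σ) u) := by
      funext u; simp only [hXdef, Function.comp_apply]; ring
    rw [hfun]
    refine h2.congr_deriv (Eq.symm ?_)
    simp only [Function.comp_apply]
    have hc2 := Real.cosh_sq (σ t)
    field_simp
    linear_combination (-s₀) * hc2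
  have hYd : ∀ t, HasDerivAt Y (-(2*s₀*r*Real.sinh (σ t))/(Real.cosh (σ t))^2) t := by
    intro t
    have hC := (Real.hasDerivAt_cosh (σ t)).comp t (hσd t)
    have hinv := hC.inv (ne_of_gt (hcoshpos (σ t)))
    have h2 := hinv.const_mul r
    have hfun : Y = fun u => r * ((Real.cosh ∘ σ) u)⁻¹ := by
      funext u; simp only [hYdef, Function.comp_apply]; ring
    rw [hfun]
    refine h2.congr_deriv (Eq.symm ?_)
    simp only [Function.comp_apply]
    field_simp
  have hγd : ∀ t, HasDerivAt γ
      ((2*s₀*r/(Real.cosh (σ t))^2 : ℝ) + ((-(2*s₀*r*Real.sinh (σ t))/(Real.cosh (σ t))^2 : ℝ)) * Complex.I) t := by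
    intro t
    exact ((hXd t).ofReal_comp).add (((hYd t).ofReal_comp).mul_const Complex.I)
  have hnorm : ∀ t, ‖deriv γ t‖ = |2*s₀| * (r / Real.cosh (σ t)) := by
    intro t
    rw [(hγd t).deriv]
    rw [Complex.norm_add_mul_I]
    have hkey : (2*s₀*r/(Real.cosh (σ t))^2)^2 + (-(2*s₀*r*Real.sinh (σ t))/(Real.cosh (σ t))^2)^2
        = (|2*s₀| * (r / Real.cosh (σ t)))^2 := by
      have hR : (|2*s₀| * (r/Real.cosh (σ t)))^2 = (2*s₀)^2 * r^2/(Real.cosh (σ t))^2 := by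
        rw [mul_pow, sq_abs, div_pow]; ring
      rw [hR]
      have hc2 := Real.cosh_sq (σ t)
      field_simp
      linear_combination (-s₀^2) * hc2
    rw [hkey]
    exact Real.sqrt_sq (by positivity)
  have hIm : ∀ t, (γ t).im = Y t := by
    intro t
    simp [hγdef]
  have hY1 : ∀ t ∈ Set.uIcc (0:ℝ) 1, 1 ≤ Y t := by
    intro t ht
    rw [Set.uIcc_of_le zero_le_one] at ht
    obtain ⟨h0, h1⟩ := ht
    rw [hYdef]
    rw [le_div_iff₀ (hcoshpos (σ t))]
    rw [one_mul, hr]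
    apply Real.cosh_le_cosh.2
    rw [hσdef]
    simp only
    rw [abs_mul]
    calc |s₀| * |2*t - 1| ≤ |s₀| * 1 := by
          apply mul_le_mul_of_nonneg_left _ (abs_nonneg _)
          rw [abs_le]; constructor <;> linarith
    _ = |s₀| := mul_one _
  have hintegrand : ∀ t ∈ Set.uIcc (0:ℝ) 1, lam (γ t) * ‖deriv γ t‖ = 2*|s₀| := by
    intro t ht
    have h1 : 1 ≤ (γ t).im := by rw [hIm]; exact hY1 t ht
    have hlam : lam (γ t) = 1 / Y t := by
      unfold lam; rw [if_pos h1, hIm]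
    rw [hlam, hnorm, hYdef]
    simp only
    have hYpos : 0 < r / Real.cosh (σ t) := by positivity
    rw [abs_mul, abs_two]
    field_simp
  have hlen : pathLen γ = 2*|s₀| := by
    unfold pathLen
    rw [intervalIntegral.integral_congr hintegrand]
    simp
  refine ⟨γ, hγc, ?_, ?_, hlen⟩
  · have h0 : σ 0 = -s₀ := by rw [hσdef]; norm_num
    have hX0 : X 0 = c := by
      rw [hXdef]; simp only [h0, Real.sinh_neg, Real.cosh_neg]
      rw [hsinh] at *
      field_simp [ne_of_gt (hcoshpos s₀)]
      ring
    have hY0 : Y 0 = 1 := by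
      rw [hYdef]; simp only [h0, Real.cosh_neg]
      rw [hr]
      exact div_self (ne_of_gt (hcoshpos s₀))
    rw [hγdef]
    simp only [hX0, hY0]
    simp
  · have h1 : σ 1 = s₀ := by rw [hσdef]; norm_num
    have hX1 : X 1 = c + x := by
      rw [hXdef]; simp only [h1]
      rw [hr]
      field_simp [ne_of_gt (hcoshpos s₀)]
      rw [hsinh]; ring
    have hY1' : Y 1 = 1 := by
      rw [hYdef]; simp only [h1]
      rw [hr]
      exact div_self (ne_of_gt (hcoshpos s₀))
    rw [hγdef]
    simp only [hX1, hY1']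
    simp

end Fgeo
section Gdist

lemma cosh_inj_nonneg {a b : ℝ} (ha : 0 ≤ a) (hb : 0 ≤ b) (h : Real.cosh a = Real.cosh b) :
    a = b := by
  rcases lt_trichotomy a b with hab | hab | hab
  · exfalso
    have h2 : |a| < |b| := by rw [abs_of_nonneg ha, abs_of_nonneg hb]; exact hab
    have := Real.cosh_lt_cosh.2 h2
    linarith
  · exact hab
  · exfalso
    have h2 : |b| < |a| := by rw [abs_of_nonneg ha, abs_of_nonneg hb]; exact hab
    have := Real.cosh_lt_cosh.2 h2
    linarith

lemma cosh_G_zero {u : ℝ} (hu : 0 ≤ u) : Real.cosh (G 0 u) = 1 + u ∧ 0 ≤ G 0 u := by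
  set w : ℝ := 1 + 0 + u with hw
  have hw1 : 1 ≤ w := by rw [hw]; linarith
  have hw2 : (0:ℝ) ≤ w^2 - 1 := by nlinarith
  set s : ℝ := Real.sqrt (w^2 - 1) with hs
  have hs0 : 0 ≤ s := Real.sqrt_nonneg _
  have hss : s^2 = w^2 - 1 := Real.sq_sqrt hw2
  have harg : 1 ≤ w + s := by linarith
  have hpos : 0 < w + s := by linarith
  have hGis : G 0 u = Real.log (w + s) := by rw [G]
  constructor
  · rw [hGis, Real.cosh_eq, Real.exp_log hpos, Real.exp_neg, Real.exp_log hpos]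
    have hmul : (w + s) * (w - s) = 1 := by nlinarith
    have hinv : (w + s)⁻¹ = w - s := by
      field_simp
      nlinarith
    rw [hinv]
    rw [hw]
    ring
  · rw [hGis]
    exact Real.log_nonneg harg

lemma G_zero_eq_arsinh (x : ℝ) : G 0 (x^2/2) = 2 * |Real.arsinh (x/2)| := by
  have h1 := cosh_G_zero (show (0:ℝ) ≤ x^2/2 by positivity)
  have h2 : Real.cosh (2 * |Real.arsinh (x/2)|) = 1 + x^2/2 := by
    rw [show 2 * |Real.arsinh (x/2)| = |2 * Real.arsinh (x/2)| by rw [abs_mul, abs_two]]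
    rw [Real.cosh_abs, Real.cosh_two_mul, Real.sinh_arsinh, Real.cosh_arsinh]
    rw [Real.sq_sqrt (by positivity)]
    ring
  apply cosh_inj_nonneg h1.2 (by positivity)
  rw [h1.1, h2]

lemma tendsto_G_right (u : ℝ) (hu : 0 ≤ u) :
    Filter.Tendsto (fun ε => G ε u) (nhdsWithin 0 (Set.Ioi 0)) (nhds (G 0 u)) := by
  have hcont : ContinuousAt (fun ε : ℝ => G ε u) 0 := by
    have h1 : Continuous (fun ε : ℝ => 1 + ε + u + Real.sqrt ((1 + ε + u)^2 - 1)) := by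
      apply Continuous.add
      · exact (continuous_const.add continuous_id).add continuous_const
      · apply Real.continuous_sqrt.comp
        apply Continuous.sub
        · exact ((continuous_const.add continuous_id).add continuous_const).pow 2
        · exact continuous_const
    have h2 : (1:ℝ) + 0 + u + Real.sqrt ((1 + 0 + u)^2 - 1) ≠ 0 := by
      have : 0 ≤ Real.sqrt ((1 + 0 + u)^2 - 1) := Real.sqrt_nonneg _
      intro hc
      linarith
    have h3 : ContinuousAt Real.log (1 + (0:ℝ) + u + Real.sqrt ((1 + 0 + u)^2 - 1)) :=
      Real.continuousAt_log h2
    have h4 := ContinuousAt.comp (g := Real.log)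
      (f := fun ε : ℝ => 1 + ε + u + Real.sqrt ((1 + ε + u)^2 - 1)) (x := (0:ℝ)) h3 h1.continuousAt
    unfold G
    exact h4
  exact hcont.continuousWithinAt.tendsto

lemma F_on_beta (c ε b : ℝ) : F c ε ((b:ℂ) + Complex.I) = G ε ((b - c)^2/2) := by
  have him : ((b:ℂ) + Complex.I).im = 1 := by simp
  have hre : ((b:ℂ) + Complex.I).re = b := by simp
  rw [F_eq_lower c ε (le_of_eq him), hre]

lemma Ydist_le_arsinh (c x : ℝ) :
    Ydist ((c:ℂ) + Complex.I) (((c + x:ℝ):ℂ) + Complex.I) ≤ 2 * |Real.arsinh (x/2)| := by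
  obtain ⟨γ, hc1, h0, h1, hlen⟩ := geodesic_exists c x
  exact csInf_le (pathSet_bddBelow _ _) ⟨γ, hc1, h0, h1, hlen.symm⟩

lemma pathLen_ge_pot (c x : ℝ) {γ : ℝ → ℂ} (hγ : ContDiff ℝ 1 γ)
    (h0 : γ 0 = (c:ℂ) + Complex.I) (h1 : γ 1 = ((c + x:ℝ):ℂ) + Complex.I) :
    G 0 (x^2/2) ≤ pathLen γ := by
  have key : ∀ ε : ℝ, 0 < ε → G ε (x^2/2) - G ε 0 ≤ pathLen γ := by
    intro ε hε
    have := len_ge (c := c) hε hγ zero_le_one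
    rw [h0, h1, F_on_beta, F_on_beta] at this
    have e1 : (c + x - c)^2/2 = x^2/2 := by ring_nf
    have e2 : (c - c)^2/2 = (0:ℝ) := by ring_nf
    rw [e1, e2] at this
    exact this
  have hG0 : G 0 0 = 0 := by
    rw [G]
    norm_num
  have htend : Filter.Tendsto (fun ε => G ε (x^2/2) - G ε 0) (nhdsWithin 0 (Set.Ioi 0))
      (nhds (G 0 (x^2/2) - G 0 0)) :=
    (tendsto_G_right _ (by positivity)).sub (tendsto_G_right 0 le_rfl)
  rw [hG0, sub_zero] at htend
  apply le_of_tendsto htend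
  filter_upwards [self_mem_nhdsWithin] with ε hε
  exact key ε hε

lemma Ydist_eq_arsinh (c x : ℝ) :
    Ydist ((c:ℂ) + Complex.I) (((c + x:ℝ):ℂ) + Complex.I) = 2 * |Real.arsinh (x/2)| := by
  apply le_antisymm (Ydist_le_arsinh c x)
  rw [← G_zero_eq_arsinh]
  apply le_csInf (pathSet_nonempty _ _)
  rintro L ⟨γ, hc1, h0, h1, rfl⟩
  exact pathLen_ge_pot c x hc1 h0 h1

end Gdist
section Main

lemma lam_ge_exp {z : ℂ} {δ : ℝ} (hδ : 0 < δ) (h : z.im ≤ 1 - δ) : Real.exp δ ≤ lam z := by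
  unfold lam
  rw [if_neg (by push_neg; linarith)]
  exact Real.exp_le_exp.2 (by linarith)

lemma F_global_lip {c ε : ℝ} (hε : 0 < ε) (w₁ w₂ : ℂ) :
    |F c ε w₁ - F c ε w₂| ≤ ‖w₁ - w₂‖ := by
  have := F_pair (c := c) hε le_rfl convex_univ
    (fun z _ hz => by rw [div_le_one (by linarith)]; exact hz) w₁ (Set.mem_univ _) w₂ (Set.mem_univ _)
  simpa using this

theorem Ydist_on_horocycle' :
    (∀ x : ℝ,
      Real.cosh (Ydist Complex.I ((x : ℂ) + Complex.I)) = 1 + x ^ 2 / 2 ∧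
      0 ≤ Ydist Complex.I ((x : ℂ) + Complex.I)) ∧
    (∀ p q : ℂ, p.im = 1 → q.im = 1 →
      ∀ γ : ℝ → ℂ, ContDiff ℝ 1 γ → γ 0 = p → γ 1 = q →
        pathLen γ = Ydist p q → ∀ t ∈ Set.Icc (0:ℝ) 1, 1 ≤ (γ t).im) := by
  have hIeq : (Complex.I : ℂ) = ((0:ℝ):ℂ) + Complex.I := by simp
  constructor
  · intro x
    have ex : Ydist Complex.I ((x:ℂ) + Complex.I)
        = Ydist (((0:ℝ):ℂ) + Complex.I) ((((0:ℝ) + x : ℝ):ℂ) + Complex.I) := by norm_num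
    constructor
    · rw [ex, Ydist_eq_arsinh 0 x, ← G_zero_eq_arsinh x]
      exact (cosh_G_zero (by positivity)).1
    · exact Ydist_nonneg _ _
  · intro p q hp hq γ hγ h0 h1 hmin t₀ ht₀
    by_contra hlt
    push_neg at hlt
    set c : ℝ := p.re with hc
    set x : ℝ := q.re - p.re with hx
    have hps : p = (c:ℂ) + Complex.I := by
      refine Complex.ext ?_ ?_ <;> simp [hp, hc]
    have hqs : q = ((c + x:ℝ):ℂ) + Complex.I := by
      have hcx : c + x = q.re := by rw [hc, hx]; ring
      rw [hcx]
      refine Complex.ext ?_ ?_ <;> simp [hq]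
    have hYdq : Ydist p q = 2 * |Real.arsinh (x/2)| := by
      rw [hps, hqs]; exact Ydist_eq_arsinh c x
    set m : ℝ := (γ t₀).im with hm
    have hmlt : m < 1 := hlt
    set δ : ℝ := (1 - m)/2 with hδdef
    have hδ : 0 < δ := by rw [hδdef]; linarith
    have ht₀0 : 0 ≤ t₀ := ht₀.1
    have ht₀1 : t₀ ≤ 1 := ht₀.2
    have him0 : (γ 0).im = 1 := by rw [h0]; exact hp
    have him1' : (γ 1).im = 1 := by rw [h1]; exact hq
    set T : Set ℝ := {t : ℝ | t ∈ Set.Icc 0 t₀ ∧ 1 - δ ≤ (γ t).im} with hT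
    have hT0 : (0:ℝ) ∈ T := ⟨⟨le_refl 0, ht₀0⟩, by rw [him0]; linarith⟩
    have hTbdd : BddAbove T := ⟨t₀, fun t ht => ht.1.2⟩
    have hTne : T.Nonempty := ⟨0, hT0⟩
    have hγimc : Continuous (fun t => (γ t).im) := Complex.continuous_im.comp hγ.continuous
    have hTclosed : IsClosed T := by
      have : T = Set.Icc 0 t₀ ∩ (fun t => (γ t).im) ⁻¹' (Set.Ici (1-δ)) := by
        ext t; simp [hT, Set.mem_Icc, and_comm]
      rw [this]
      exact isClosed_Icc.inter (IsClosed.preimage hγimc isClosed_Ici)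
    set t₁ : ℝ := sSup T with ht₁def
    have ht₁T : t₁ ∈ T := hTclosed.csSup_mem hTne hTbdd
    have ht₁0 : 0 ≤ t₁ := ht₁T.1.1
    have ht₁t₀ : t₁ ≤ t₀ := ht₁T.1.2
    have him1 : 1 - δ ≤ (γ t₁).im := ht₁T.2
    have ht₁lt : t₁ < t₀ := by
      rcases lt_or_eq_of_le ht₁t₀ with h | h
      · exact h
      · exfalso; rw [h] at him1; rw [← hm] at him1; rw [hδdef] at him1; linarith
    have hmid : ∀ t, t₁ < t → t ≤ t₀ → (γ t).im < 1 - δ := by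
      intro t h2 h3
      by_contra hge
      push_neg at hge
      have : t ∈ T := ⟨⟨by linarith, h3⟩, hge⟩
      have := le_csSup hTbdd this
      linarith
    have heq : (γ t₁).im ≤ 1 - δ := by
      by_contra hgt
      push_neg at hgt
      have hev : ∀ᶠ s in nhds t₁, 1 - δ < (γ s).im :=
        hγimc.continuousAt.eventually (IsOpen.mem_nhds isOpen_Ioi hgt)
      obtain ⟨η, hη, hball⟩ := Metric.eventually_nhds_iff.1 hev
      set t₂ : ℝ := min t₀ (t₁ + η/2) with ht₂
      have h4 : t₁ < t₂ := lt_min ht₁lt (by linarith)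
      have h5 : t₂ ≤ t₀ := min_le_left _ _
      have h6 : dist t₂ t₁ < η := by
        rw [Real.dist_eq, abs_of_pos (by linarith)]
        have : t₂ ≤ t₁ + η/2 := min_le_right _ _
        linarith
      have : t₂ ∈ T := ⟨⟨by linarith, h5⟩, le_of_lt (hball h6)⟩
      have := le_csSup hTbdd this
      linarith
    have hexp1 : (1:ℝ) ≤ Real.exp δ := by
      rw [← Real.exp_zero]; exact Real.exp_le_exp.2 (le_of_lt hδ)
    have hgap : ∀ ε : ℝ, 0 < ε →
        G ε (x^2/2) - G ε 0 + (Real.exp δ - 1)*(1 - δ - m) ≤ pathLen γ := by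
      intro ε hε
      have hint : Continuous (fun t => lam (γ t) * ‖deriv γ t‖) :=
        (lam_continuous.comp hγ.continuous).mul ((hγ.continuous_deriv le_rfl).norm)
      have hdnorm : Continuous (fun t => ‖deriv γ t‖) := (hγ.continuous_deriv le_rfl).norm
      have hsplit : pathLen γ =
          (∫ t in (0:ℝ)..t₁, lam (γ t) * ‖deriv γ t‖) +
          ((∫ t in t₁..t₀, lam (γ t) * ‖deriv γ t‖) +
           (∫ t in t₀..(1:ℝ), lam (γ t) * ‖deriv γ t‖)) := by
        unfold pathLen
        rw [intervalIntegral.integral_add_adjacent_intervals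
          (hint.intervalIntegrable t₁ t₀) (hint.intervalIntegrable t₀ 1)]
        rw [intervalIntegral.integral_add_adjacent_intervals
          (hint.intervalIntegrable 0 t₁) (hint.intervalIntegrable t₁ 1)]
      have e1 : F c ε (γ t₁) - F c ε (γ 0) ≤ ∫ t in (0:ℝ)..t₁, lam (γ t) * ‖deriv γ t‖ :=
        len_ge hε hγ ht₁0
      have e3 : F c ε (γ 1) - F c ε (γ t₀) ≤ ∫ t in t₀..(1:ℝ), lam (γ t) * ‖deriv γ t‖ :=
        len_ge hε hγ ht₀1
      have hlamge : ∀ t ∈ Set.Icc t₁ t₀, Real.exp δ * ‖deriv γ t‖ ≤ lam (γ t) * ‖deriv γ t‖ := by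
        intro t ht
        have him : (γ t).im ≤ 1 - δ := by
          rcases lt_or_eq_of_le ht.1 with h | h
          · exact le_of_lt (hmid t h ht.2)
          · rw [← h]; exact heq
        exact mul_le_mul_of_nonneg_right (lam_ge_exp hδ him) (norm_nonneg _)
      have e2a : Real.exp δ * ∫ t in t₁..t₀, ‖deriv γ t‖ ≤
          ∫ t in t₁..t₀, lam (γ t) * ‖deriv γ t‖ := by
        rw [← intervalIntegral.integral_const_mul]
        exact intervalIntegral.integral_mono_on (le_of_lt ht₁lt)
          ((continuous_const.mul hdnorm).intervalIntegrable _ _)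
          (hint.intervalIntegrable _ _) hlamge
      have e2b : ‖γ t₀ - γ t₁‖ ≤ ∫ t in t₁..t₀, ‖deriv γ t‖ := by
        have hFTC : (∫ t in t₁..t₀, deriv γ t) = γ t₀ - γ t₁ :=
          intervalIntegral.integral_deriv_eq_sub
            (fun t _ => (hγ.differentiable one_ne_zero t))
            (((hγ.continuous_deriv le_rfl)).intervalIntegrable _ _)
        calc ‖γ t₀ - γ t₁‖ = ‖∫ t in t₁..t₀, deriv γ t‖ := by rw [hFTC]
        _ ≤ ∫ t in t₁..t₀, ‖deriv γ t‖ :=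
          intervalIntegral.norm_integral_le_integral_norm (le_of_lt ht₁lt)
      have e2c : 1 - δ - m ≤ ‖γ t₀ - γ t₁‖ := by
        have h7 := Complex.abs_im_le_norm (γ t₀ - γ t₁)
        rw [Complex.sub_im] at h7
        have h8 : (γ t₁).im - (γ t₀).im ≤ |(γ t₀).im - (γ t₁).im| := by
          rw [abs_sub_comm]; exact le_abs_self _
        rw [← hm] at *
        linarith
      have e2d : F c ε (γ t₀) - F c ε (γ t₁) ≤ ‖γ t₀ - γ t₁‖ := by
        have := F_global_lip (c := c) hε (γ t₀) (γ t₁)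
        have h9 := le_abs_self (F c ε (γ t₀) - F c ε (γ t₁))
        linarith
      have e2 : F c ε (γ t₀) - F c ε (γ t₁) + (Real.exp δ - 1)*(1 - δ - m) ≤
          ∫ t in t₁..t₀, lam (γ t) * ‖deriv γ t‖ := by
        have hI : 1 - δ - m ≤ ∫ t in t₁..t₀, ‖deriv γ t‖ := le_trans e2c e2b
        have hI2 : F c ε (γ t₀) - F c ε (γ t₁) ≤ ∫ t in t₁..t₀, ‖deriv γ t‖ := le_trans e2d e2b
        have hmul : (Real.exp δ - 1)*(1 - δ - m) ≤
            (Real.exp δ - 1) * ∫ t in t₁..t₀, ‖deriv γ t‖ :=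
          mul_le_mul_of_nonneg_left hI (by linarith)
        nlinarith [e2a]
      have hv1 : F c ε (γ 1) = G ε (x^2/2) := by
        rw [h1, hqs, F_on_beta]
        congr 1
        ring
      have hv0 : F c ε (γ 0) = G ε 0 := by
        rw [h0, hps, F_on_beta]
        norm_num
      rw [hsplit]
      rw [hv1] at e3
      rw [hv0] at e1
      linarith
    -- pass to the limit ε → 0⁺
    have hfin : G 0 (x^2/2) + (Real.exp δ - 1)*(1 - δ - m) ≤ pathLen γ := by
      have hG0 : G 0 0 = 0 := by rw [G]; norm_num
      have htend : Filter.Tendsto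
          (fun ε => G ε (x^2/2) - G ε 0 + (Real.exp δ - 1)*(1 - δ - m))
          (nhdsWithin 0 (Set.Ioi 0))
          (nhds (G 0 (x^2/2) - G 0 0 + (Real.exp δ - 1)*(1 - δ - m))) :=
        Filter.Tendsto.add
          ((tendsto_G_right _ (by positivity)).sub (tendsto_G_right 0 le_rfl))
          tendsto_const_nhds
      rw [hG0, sub_zero] at htend
      apply le_of_tendsto htend
      filter_upwards [self_mem_nhdsWithin] with ε hε
      exact hgap ε hε
    have hval : pathLen γ = G 0 (x^2/2) := by
      rw [hmin, hYdq, G_zero_eq_arsinh]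
    have hgappos : 0 < (Real.exp δ - 1)*(1 - δ - m) := by
      have h10 : 1 < Real.exp δ := by
        rw [← Real.exp_zero]; exact Real.exp_lt_exp.2 hδ
      have h11 : 0 < 1 - δ - m := by rw [hδdef]; linarith
      exact mul_pos (by linarith) h11
    rw [hval] at hfin
    linarith

end Main

theorem Ydist_on_horocycle :
    (∀ x : ℝ,
      Real.cosh (Ydist Complex.I ((x : ℂ) + Complex.I)) = 1 + x ^ 2 / 2 ∧
      0 ≤ Ydist Complex.I ((x : ℂ) + Complex.I)) ∧
    (∀ p q : ℂ, p.im = 1 → q.im = 1 →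
      ∀ γ : ℝ → ℂ, ContDiff ℝ 1 γ → γ 0 = p → γ 1 = q →
        pathLen γ = Ydist p q → ∀ t ∈ Set.Icc (0:ℝ) 1, 1 ≤ (γ t).im) := by
  exact Ydist_on_horocycle'
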